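/- Let 1/√2 < α < 1, β = √(1−α²), N ≥ 2, and P_fail = (α²−β²)^{N−1}. The singlet-assemblage fraction of the distilled assemblage equals F_Φ(Σ^dist) = √(1 − ½(α−β)²(α²−β²)^{N−1}). -/

import Mathlib

open Matrix Finset
open scoped ComplexOrder

/-- Positive-semidefinite square root of a matrix (defined as `0` if the matrix
is not positive semidefinite). -/
noncomputable def matSqrt {d : ℕ} (A : Matrix (Fin d) (Fin d) ℂ) :
    Matrix (Fin d) (Fin d) ℂ :=
  open Classical in
  if h : A.PosSemidef then
    (h.1.eigenvectorUnitary : Matrix (Fin d) (Fin d) ℂ) *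
      diagonal ((↑) ∘ (fun x => Real.sqrt x) ∘ h.1.eigenvalues) *
      (star h.1.eigenvectorUnitary : Matrix (Fin d) (Fin d) ℂ)
  else 0

/-- Fidelity between positive semidefinite matrices: `F(A,B) = Tr[√(√A · B · √A)]`. -/
noncomputable def mFid {d : ℕ} (A B : Matrix (Fin d) (Fin d) ℂ) : ℝ :=
  (matSqrt (matSqrt A * B * matSqrt A)).trace.re

/-- The standard basis vector `|0⟩` of `ℂ²`. -/
def e0 : Fin 2 → ℂ := ![1, 0]

/-- The standard basis vector `|1⟩` of `ℂ²`. -/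
def e1 : Fin 2 → ℂ := ![0, 1]

/-- The projector `|0⟩⟨0|`. -/
def P00 : Matrix (Fin 2) (Fin 2) ℂ := vecMulVec e0 (star e0)

/-- The projector `|1⟩⟨1|`. -/
def P11 : Matrix (Fin 2) (Fin 2) ℂ := vecMulVec e1 (star e1)

/-- The Kraus operator `K⁰ = (β/α)|0⟩⟨0| + |1⟩⟨1|` of the successful filter outcome. -/
noncomputable def K0 (α β : ℝ) : Matrix (Fin 2) (Fin 2) ℂ :=
  ((β / α : ℝ) : ℂ) • P00 + P11

/-- The Kraus operator `K¹ = (√(α²−β²)/α)|0⟩⟨0|` of the failed filter outcome. -/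
noncomputable def K1 (α β : ℝ) : Matrix (Fin 2) (Fin 2) ℂ :=
  ((Real.sqrt (α ^ 2 - β ^ 2) / α : ℝ) : ℂ) • P00

/-- Bob's reduced state `ρ_B = α²|0⟩⟨0| + β²|1⟩⟨1|` of the assemblage `Σ^(α)`. -/
noncomputable def ρB (α β : ℝ) : Matrix (Fin 2) (Fin 2) ℂ :=
  ((α ^ 2 : ℝ) : ℂ) • P00 + ((β ^ 2 : ℝ) : ℂ) • P11

/-- The vector `|α₊⟩ = α|0⟩ + β|1⟩`. -/
def ketαp (α β : ℝ) : Fin 2 → ℂ := ![(α : ℂ), (β : ℂ)]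

/-- The vector `|α₋⟩ = α|0⟩ − β|1⟩`. -/
def ketαm (α β : ℝ) : Fin 2 → ℂ := ![(α : ℂ), -(β : ℂ)]

/-- The vector `|+⟩ = (|0⟩+|1⟩)/√2`. -/
noncomputable def ketp : Fin 2 → ℂ :=
  ![(1 / Real.sqrt 2 : ℝ), (1 / Real.sqrt 2 : ℝ)]

/-- The vector `|−⟩ = (|0⟩−|1⟩)/√2`. -/
noncomputable def ketm : Fin 2 → ℂ :=
  ![(1 / Real.sqrt 2 : ℝ), (-(1 / Real.sqrt 2) : ℝ)]

/-- The assemblage `Σ^(α)` with components `σ^(α)_{a|x}` (first index `a`, second `x`):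
`σ^(α)_{0|0} = α²|0⟩⟨0|`, `σ^(α)_{1|0} = β²|1⟩⟨1|`,
`σ^(α)_{0|1} = ½|α₊⟩⟨α₊|`, `σ^(α)_{1|1} = ½|α₋⟩⟨α₋|`. -/
noncomputable def σα (α β : ℝ) (a x : Fin 2) : Matrix (Fin 2) (Fin 2) ℂ :=
  if x = 0 then
    if a = 0 then ((α ^ 2 : ℝ) : ℂ) • P00 else ((β ^ 2 : ℝ) : ℂ) • P11
  else
    if a = 0 then (1 / 2 : ℂ) • vecMulVec (ketαp α β) (star (ketαp α β))
    else (1 / 2 : ℂ) • vecMulVec (ketαm α β) (star (ketαm α β))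

/-- The singlet assemblage `Σ^{Φ⁺}` with components
`σ^{Φ⁺}_{0|0} = ½|0⟩⟨0|`, `σ^{Φ⁺}_{1|0} = ½|1⟩⟨1|`,
`σ^{Φ⁺}_{0|1} = ½|+⟩⟨+|`, `σ^{Φ⁺}_{1|1} = ½|−⟩⟨−|`. -/
noncomputable def σΦ (a x : Fin 2) : Matrix (Fin 2) (Fin 2) ℂ :=
  if x = 0 then
    if a = 0 then (1 / 2 : ℂ) • P00 else (1 / 2 : ℂ) • P11
  else
    if a = 0 then (1 / 2 : ℂ) • vecMulVec ketp (star ketp)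
    else (1 / 2 : ℂ) • vecMulVec ketm (star ketm)

/-- The distilled assemblage `Σ^dist` obtained on average from the `N`-copy protocol,
with `P_fail = (α²−β²)^{N−1}` and `P_success = 1 − P_fail`:
`σ^dist_{0|0} = (½P_success + α²P_fail)|0⟩⟨0|`,
`σ^dist_{1|0} = (½P_success + β²P_fail)|1⟩⟨1|`,
`σ^dist_{0|1} = ½(P_success|+⟩⟨+| + P_fail|α₊⟩⟨α₊|)`,
`σ^dist_{1|1} = ½(P_success|−⟩⟨−| + P_fail|α₋⟩⟨α₋|)`. -/
noncomputable def σdist (α β : ℝ) (N : ℕ) (a x : Fin 2) : Matrix (Fin 2) (Fin 2) ℂ :=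
  let Pfail : ℝ := (α ^ 2 - β ^ 2) ^ (N - 1)
  let Psuccess : ℝ := 1 - Pfail
  if x = 0 then
    if a = 0 then ((1 / 2 * Psuccess + α ^ 2 * Pfail : ℝ) : ℂ) • P00
    else ((1 / 2 * Psuccess + β ^ 2 * Pfail : ℝ) : ℂ) • P11
  else
    if a = 0 then
      (1 / 2 : ℂ) • (((Psuccess : ℝ) : ℂ) • vecMulVec ketp (star ketp) +
        ((Pfail : ℝ) : ℂ) • vecMulVec (ketαp α β) (star (ketαp α β)))
    else
      (1 / 2 : ℂ) • (((Psuccess : ℝ) : ℂ) • vecMulVec ketm (star ketm) +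
        ((Pfail : ℝ) : ℂ) • vecMulVec (ketαm α β) (star (ketαm α β)))

/-!
Against a pure (unnormalised) state the fidelity is `F(A, |ψ⟩⟨ψ|) = √⟨ψ|A|ψ⟩`: `√A |ψ⟩⟨ψ| √A`
has rank one, and a rank-one positive matrix `|w⟩⟨w|` has square root `|w⟩⟨w| / ‖w‖`. Every
`σ^{Φ⁺}_{a|x}` is such a state, so each fidelity is an expectation value. With
`s = P_success/4` and `p = P_fail/2`, the `x = 0` sum is `√(s + α²p) + √(s + β²p)` and the
`x = 1` sum is `√(4s + (α+β)²p)`, which is the smaller one by the triangle inequality in `ℝ²`;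
`α² + β² = 1` turns `4s + (α+β)²p` into `1 − ½(α−β)²P_fail`.
-/

section MatrixSqrt

open scoped MatrixOrder

lemma matSqrt_eq_cfcSqrt {d : ℕ} {A : Matrix (Fin d) (Fin d) ℂ} (hA : A.PosSemidef) :
    matSqrt A = CFC.sqrt A := by
  rw [matSqrt, dif_pos hA, CFC.sqrt_eq_real_sqrt A hA.nonneg, cfcₙ_eq_cfc, hA.1.cfc_eq]
  simp [IsHermitian.cfc, Function.comp_def]

lemma star_dotProduct_self_eq_re {n : Type*} [Fintype n] (w : n → ℂ) :
    star w ⬝ᵥ w = ((star w ⬝ᵥ w).re : ℂ) :=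
  Complex.eq_re_of_ofReal_le (r := 0) (by simp [dotProduct_star_self_nonneg w])

lemma re_star_dotProduct_self_pos {n : Type*} [Fintype n] {w : n → ℂ} (hw : w ≠ 0) :
    0 < (star w ⬝ᵥ w).re := by
  refine lt_of_le_of_ne (Complex.nonneg_iff.mp (dotProduct_star_self_nonneg w)).1 fun h ↦ hw ?_
  rw [← dotProduct_star_self_eq_zero, star_dotProduct_self_eq_re, ← h, Complex.ofReal_zero]

lemma vecMulVec_star_mul_self {n : Type*} [Fintype n] (w : n → ℂ) :
    vecMulVec w (star w) * vecMulVec w (star w) = (star w ⬝ᵥ w) • vecMulVec w (star w) := by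
  rw [vecMulVec_mul_vecMulVec, vecMulVec_smul]

lemma matSqrt_vecMulVec_star {d : ℕ} (w : Fin d → ℂ) :
    matSqrt (vecMulVec w (star w)) =
      (((√(star w ⬝ᵥ w).re)⁻¹ : ℝ) : ℂ) • vecMulVec w (star w) := by
  rw [matSqrt_eq_cfcSqrt (posSemidef_vecMulVec_self_star w)]
  rcases eq_or_ne w 0 with rfl | hw
  · simp
  have hpos := re_star_dotProduct_self_pos hw
  have hre := star_dotProduct_self_eq_re w
  set n := (star w ⬝ᵥ w).re
  refine CFC.sqrt_unique ?_ ?_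
  · have hnorm : (√n)⁻¹ * (√n)⁻¹ * n = 1 := by
      rw [← mul_inv, Real.mul_self_sqrt hpos.le, inv_mul_cancel₀ hpos.ne']
    rw [smul_mul_smul_comm, vecMulVec_star_mul_self, smul_smul, hre,
      ← Complex.ofReal_mul, ← Complex.ofReal_mul, hnorm, Complex.ofReal_one, one_smul]
  · rw [Matrix.nonneg_iff_posSemidef]
    exact (posSemidef_vecMulVec_self_star w).smul (by positivity)

lemma mFid_vecMulVec_star {d : ℕ} {A : Matrix (Fin d) (Fin d) ℂ} (hA : A.PosSemidef)
    (v : Fin d → ℂ) : mFid A (vecMulVec v (star v)) = √(star v ⬝ᵥ A *ᵥ v).re := by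
  have hQ : (matSqrt A)ᴴ = matSqrt A := by
    rw [matSqrt_eq_cfcSqrt hA]
    exact (Matrix.nonneg_iff_posSemidef.mp (CFC.sqrt_nonneg A)).isHermitian
  have hQQ : matSqrt A * matSqrt A = A := by
    rw [matSqrt_eq_cfcSqrt hA, CFC.sqrt_mul_sqrt_self A hA.nonneg]
  set w := matSqrt A *ᵥ v
  have hconj : matSqrt A * vecMulVec v (star v) * matSqrt A = vecMulVec w (star w) := by
    rw [mul_vecMulVec, vecMulVec_mul, star_mulVec, hQ]
  have hexp : star w ⬝ᵥ w = star v ⬝ᵥ A *ᵥ v := by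
    rw [star_mulVec, hQ, ← dotProduct_mulVec, mulVec_mulVec, hQQ]
  have hre := star_dotProduct_self_eq_re w
  rw [mFid, hconj, matSqrt_vecMulVec_star, trace_smul, trace_vecMulVec, dotProduct_comm w,
    ← hexp]
  set n := (star w ⬝ᵥ w).re
  rw [hre, smul_eq_mul, ← Complex.ofReal_mul, Complex.ofReal_re, inv_mul_eq_div, Real.div_sqrt]

end MatrixSqrt

lemma mFid_smul_vecMulVec_star {d : ℕ} {A : Matrix (Fin d) (Fin d) ℂ} (hA : A.PosSemidef)
    {l : ℝ} (hl : 0 ≤ l) (v : Fin d → ℂ) :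
    mFid A ((l : ℂ) • vecMulVec v (star v)) = √(l * (star v ⬝ᵥ A *ᵥ v).re) := by
  have hscale : (l : ℂ) • vecMulVec v (star v) =
      vecMulVec ((√l : ℂ) • v) (star ((√l : ℂ) • v)) := by
    rw [star_smul, smul_vecMulVec, vecMulVec_smul, smul_smul, Complex.star_def,
      Complex.conj_ofReal, ← Complex.ofReal_mul, Real.mul_self_sqrt hl]
  rw [hscale, mFid_vecMulVec_star hA, star_smul, mulVec_smul, dotProduct_smul, smul_dotProduct,
    Complex.star_def, Complex.conj_ofReal, smul_eq_mul, smul_eq_mul, ← mul_assoc,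
    ← Complex.ofReal_mul, Real.mul_self_sqrt hl, Complex.re_ofReal_mul]

lemma star_dotProduct_vecMulVec_star_mulVec {n : Type*} [Fintype n] (u v : n → ℂ) :
    star u ⬝ᵥ vecMulVec v (star v) *ᵥ u = Complex.normSq (star v ⬝ᵥ u) := by
  rw [vecMulVec_mulVec, op_smul_eq_smul, dotProduct_smul, smul_eq_mul,
    Complex.normSq_eq_conj_mul_self, star_dotProduct u v, mul_comm]
  rfl

lemma mFid_smul_vecMulVec_star_self {d : ℕ} {c l : ℝ} (hc : 0 ≤ c) (hl : 0 ≤ l)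
    {u : Fin d → ℂ} (hu : star u ⬝ᵥ u = 1) :
    mFid ((c : ℂ) • vecMulVec u (star u)) ((l : ℂ) • vecMulVec u (star u)) = √(l * c) := by
  rw [mFid_smul_vecMulVec_star ((posSemidef_vecMulVec_self_star u).smul
    (Complex.zero_le_real.2 hc)) hl]
  simp [smul_mulVec, star_dotProduct_vecMulVec_star_mulVec, hu]

lemma mFid_mixture_vecMulVec_star {d : ℕ} {s p l : ℝ} (hs : 0 ≤ s) (hp : 0 ≤ p) (hl : 0 ≤ l)
    {u v : Fin d → ℂ} (hu : star u ⬝ᵥ u = 1) :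
    mFid ((s : ℂ) • vecMulVec u (star u) + (p : ℂ) • vecMulVec v (star v))
        ((l : ℂ) • vecMulVec u (star u)) =
      √(l * (s + p * Complex.normSq (star v ⬝ᵥ u))) := by
  have hA := ((posSemidef_vecMulVec_self_star u).smul (Complex.zero_le_real.2 hs)).add
    ((posSemidef_vecMulVec_self_star v).smul (Complex.zero_le_real.2 hp))
  rw [mFid_smul_vecMulVec_star hA hl]
  simp only [add_mulVec, smul_mulVec, dotProduct_add, dotProduct_smul,
    star_dotProduct_vecMulVec_star_mulVec, hu]
  simp

lemma ofReal_inv_sqrt_two_mul_self : ((√2 : ℝ) : ℂ)⁻¹ * ((√2 : ℝ) : ℂ)⁻¹ = 1 / 2 := by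
  rw [← mul_inv, ← Complex.ofReal_mul, Real.mul_self_sqrt zero_le_two]
  norm_num

section Distilled

variable {α β P : ℝ} {N : ℕ}

lemma sum_mFid_σdist_σΦ_zero (hP : (α ^ 2 - β ^ 2) ^ (N - 1) = P) (hP0 : 0 ≤ P) (hP1 : P ≤ 1) :
    ∑ a, mFid (σdist α β N a 0) (σΦ a 0) =
      √((1 - P) / 4 + α ^ 2 * (P / 2)) + √((1 - P) / 4 + β ^ 2 * (P / 2)) := by
  have he0 : star e0 ⬝ᵥ e0 = 1 := by simp [e0, dotProduct, Fin.sum_univ_two]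
  have he1 : star e1 ⬝ᵥ e1 = 1 := by simp [e1, dotProduct, Fin.sum_univ_two]
  have h0 : σdist α β N 0 0 =
      ((1 / 2 * (1 - P) + α ^ 2 * P : ℝ) : ℂ) • vecMulVec e0 (star e0) := by
    simp [σdist, P00, hP]
  have h1 : σdist α β N 1 0 =
      ((1 / 2 * (1 - P) + β ^ 2 * P : ℝ) : ℂ) • vecMulVec e1 (star e1) := by
    simp [σdist, P11, hP]
  have hΦ0 : σΦ 0 0 = ((1 / 2 : ℝ) : ℂ) • vecMulVec e0 (star e0) := by norm_num [σΦ, P00]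
  have hΦ1 : σΦ 1 0 = ((1 / 2 : ℝ) : ℂ) • vecMulVec e1 (star e1) := by norm_num [σΦ, P11]
  rw [Fin.sum_univ_two, h0, h1, hΦ0, hΦ1,
    mFid_smul_vecMulVec_star_self (by positivity) (by norm_num) he0,
    mFid_smul_vecMulVec_star_self (by positivity) (by norm_num) he1]
  ring_nf

lemma sum_mFid_σdist_σΦ_one (hP : (α ^ 2 - β ^ 2) ^ (N - 1) = P) (hP0 : 0 ≤ P) (hP1 : P ≤ 1) :
    ∑ a, mFid (σdist α β N a 1) (σΦ a 1) = √(1 - P + (α + β) ^ 2 * P / 2) := by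
  have hp : star ketp ⬝ᵥ ketp = 1 := by
    simp [ketp, dotProduct, Fin.sum_univ_two, ofReal_inv_sqrt_two_mul_self, ← two_mul]
  have hm : star ketm ⬝ᵥ ketm = 1 := by
    simp [ketm, dotProduct, Fin.sum_univ_two, ofReal_inv_sqrt_two_mul_self, ← two_mul]
  have hαp : star (ketαp α β) ⬝ᵥ ketp = ((α + β) / √2 : ℝ) := by
    simp [ketp, ketαp, dotProduct, Fin.sum_univ_two]; ring
  have hαm : star (ketαm α β) ⬝ᵥ ketm = ((α + β) / √2 : ℝ) := by
    simp [ketm, ketαm, dotProduct, Fin.sum_univ_two]; ring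
  have h0 : σdist α β N 0 1 = (((1 - P) / 2 : ℝ) : ℂ) • vecMulVec ketp (star ketp) +
      ((P / 2 : ℝ) : ℂ) • vecMulVec (ketαp α β) (star (ketαp α β)) := by
    simp only [σdist, hP, one_ne_zero, if_false]
    push_cast
    module
  have h1 : σdist α β N 1 1 = (((1 - P) / 2 : ℝ) : ℂ) • vecMulVec ketm (star ketm) +
      ((P / 2 : ℝ) : ℂ) • vecMulVec (ketαm α β) (star (ketαm α β)) := by
    simp only [σdist, hP, one_ne_zero, if_false]
    push_cast
    module
  have hΦ0 : σΦ 0 1 = ((1 / 2 : ℝ) : ℂ) • vecMulVec ketp (star ketp) := by norm_num [σΦ]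
  have hΦ1 : σΦ 1 1 = ((1 / 2 : ℝ) : ℂ) • vecMulVec ketm (star ketm) := by norm_num [σΦ]
  rw [Fin.sum_univ_two, h0, h1, hΦ0, hΦ1,
    mFid_mixture_vecMulVec_star (by linarith) (by linarith) (by norm_num) hp,
    mFid_mixture_vecMulVec_star (by linarith) (by linarith) (by norm_num) hm, hαp, hαm,
    Complex.normSq_ofReal, ← two_mul, div_mul_div_comm, Real.mul_self_sqrt zero_le_two,
    show 1 - P + (α + β) ^ 2 * P / 2 =
      2 ^ 2 * (1 / 2 * ((1 - P) / 2 + P / 2 * ((α + β) * (α + β) / 2))) by ring,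
    Real.sqrt_mul (sq_nonneg 2), Real.sqrt_sq zero_le_two]

end Distilled

/-- The triangle inequality in `ℝ²` for the vectors `(√s, a√p)` and `(√s, b√p)`. -/
lemma sqrt_four_mul_add_le_sqrt_add_sqrt {s p : ℝ} (hs : 0 ≤ s) (hp : 0 ≤ p) (a b : ℝ) :
    √(4 * s + (a + b) ^ 2 * p) ≤ √(s + a ^ 2 * p) + √(s + b ^ 2 * p) := by
  have hcs : s + a * b * p ≤ √(s + a ^ 2 * p) * √(s + b ^ 2 * p) := by
    rw [← Real.sqrt_mul (by positivity)]
    refine (le_abs_self _).trans (Real.abs_le_sqrt ?_)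
    nlinarith [mul_nonneg (mul_nonneg hs hp) (sq_nonneg (a - b))]
  rw [Real.sqrt_le_left (by positivity), add_sq (√_), Real.sq_sqrt (by positivity),
    Real.sq_sqrt (by positivity)]
  nlinarith [hcs]

theorem singlet_fraction_distilled_general (α β : ℝ) (hα2 : 1 / Real.sqrt 2 < α) (hα : α < 1)
    (hβ : β = Real.sqrt (1 - α ^ 2)) (N : ℕ) :
    min (∑ a, mFid (σdist α β N a 0) (σΦ a 0))
        (∑ a, mFid (σdist α β N a 1) (σΦ a 1)) =
      Real.sqrt (1 - 1 / 2 * (α - β) ^ 2 * (α ^ 2 - β ^ 2) ^ (N - 1)) := by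
  have hβ2 : β ^ 2 = 1 - α ^ 2 := by
    rw [hβ, Real.sq_sqrt]
    nlinarith [(one_div_pos.2 (Real.sqrt_pos.2 two_pos)).trans hα2]
  have hα_sq : 1 / 2 < α ^ 2 := by
    have := pow_lt_pow_left₀ hα2 (by positivity) two_ne_zero
    rwa [div_pow, Real.sq_sqrt zero_le_two, one_pow] at this
  set P := (α ^ 2 - β ^ 2) ^ (N - 1) with hP
  have hP0 : 0 ≤ P := pow_nonneg (by linarith) _
  have hP1 : P ≤ 1 := pow_le_one₀ (by linarith) (by nlinarith)
  rw [sum_mFid_σdist_σΦ_zero hP.symm hP0 hP1, sum_mFid_σdist_σΦ_one hP.symm hP0 hP1,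
    min_eq_right]
  · congr 1
    linear_combination P * hβ2
  · calc √(1 - P + (α + β) ^ 2 * P / 2)
        _ = √(4 * ((1 - P) / 4) + (α + β) ^ 2 * (P / 2)) := by ring_nf
        _ ≤ _ := sqrt_four_mul_add_le_sqrt_add_sqrt (by linarith) (by linarith) α β

/-- The singlet-assemblage fraction of the distilled assemblage,
`F_Φ(Σ^dist) = min_{x∈{0,1}} Σ_a F(σ^dist_{a|x}, σ^{Φ⁺}_{a|x})`, equals
`√(1 − ½(α−β)²(α²−β²)^{N−1})`. -/
theorem singlet_fraction_distilled (α β : ℝ) (hα2 : 1 / Real.sqrt 2 < α) (hα : α < 1)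
    (hβ : β = Real.sqrt (1 - α ^ 2)) (N : ℕ) (hN : 2 ≤ N) :
    min (∑ a, mFid (σdist α β N a 0) (σΦ a 0))
        (∑ a, mFid (σdist α β N a 1) (σΦ a 1)) =
      Real.sqrt (1 - 1 / 2 * (α - β) ^ 2 * (α ^ 2 - β ^ 2) ^ (N - 1)) :=
  singlet_fraction_distilled_general α β hα2 hα hβ N
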